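/- arXiv:1202.0020 — 2 statements merged into one kernel-verified Lean document; each statement's English description precedes it below -/
import Mathlib

section
/- Let n > 0 be a real number, define the generalized binomial coefficient B(n,k) = (∏_{j=0}^{k−1} (n − j)) / k! for k ∈ ℕ, and let φ ∈ (−π, π). Then the series ∑_{k≥0} B(n,k)·cos(kφ) has sum 2^n · cos(φ/2)^n · cos(nφ/2) (in the sense of HasSum). -/
/-!
The binomial series `∑ choose n k * z ^ k` sums to `(1 + z) ^ n` on the open unit disk. For
`n > 0` the coefficients are absolutely summable (beyond `k ≥ n` the quantity `k * |choose n k|`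
decreases, and `n * |choose n k|` is its decrement), so the series converges uniformly on the
closed disk and the identity extends to the boundary by continuity. At `z = exp (φ i)` one has
`1 + z = 2 cos (φ / 2) * exp (φ i / 2)` with `2 cos (φ / 2) > 0` and `|φ / 2| < π`, so
`(1 + z) ^ n = (2 cos (φ / 2)) ^ n * exp (n φ i / 2)`; take real parts.
-/

open Finset Complex Metric

theorem Ring.choose_eq_prod_range_div_factorial {K : Type*} [Field K] [CharZero K] (a : K) (k : ℕ) :
    Ring.choose a k = (∏ j ∈ range k, (a - j)) / k.factorial := by
  rw [Ring.choose_eq_smul, ← descPochhammer_eval_eq_prod_range, smul_eq_mul, inv_mul_eq_div,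
    ← descPochhammer_map (algebraMap ℤ K), Polynomial.eval_map_algebraMap,
    Polynomial.aeval_eq_smeval]

theorem Ring.succ_mul_choose_succ {K : Type*} [Field K] [CharZero K] (a : K) (k : ℕ) :
    (k + 1) * Ring.choose a (k + 1) = (a - k) * Ring.choose a k := by
  simp only [Ring.choose_eq_prod_range_div_factorial, prod_range_succ, Nat.factorial_succ]
  push_cast
  field_simp

theorem Real.succ_mul_abs_choose_succ {a : ℝ} {k : ℕ} (hk : a ≤ k) :
    (k + 1) * |Ring.choose a (k + 1)| = (k - a) * |Ring.choose a k| := by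
  have h := congrArg abs (Ring.succ_mul_choose_succ a k)
  rwa [abs_mul, abs_mul, abs_of_pos (by positivity : (0 : ℝ) < k + 1),
    abs_of_nonpos (by linarith : a - k ≤ 0), neg_sub] at h

theorem Real.summable_abs_choose {a : ℝ} (ha : 0 < a) : Summable fun k ↦ |Ring.choose a k| := by
  obtain ⟨K, hK⟩ := exists_nat_ge a
  rw [← summable_nat_add_iff K]
  set g : ℕ → ℝ := fun i ↦ (i + K : ℕ) * |Ring.choose a (i + K)|
  have telescope (i : ℕ) : a * |Ring.choose a (i + K)| = g i - g (i + 1) := by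
    have h := Real.succ_mul_abs_choose_succ (k := i + K) (by push_cast; linarith)
    simp only [g, Nat.add_right_comm i 1 K]
    push_cast at h ⊢
    linarith
  refine summable_of_sum_range_le (c := g 0 / a) (fun _ ↦ abs_nonneg _) fun m ↦ ?_
  rw [le_div_iff₀ ha, mul_comm, mul_sum, sum_congr rfl fun i _ ↦ telescope i, sum_range_sub']
  have : 0 ≤ g m := by positivity
  linarith

theorem Complex.hasSum_choose_mul_pow_of_norm_lt_one (a : ℂ) {z : ℂ} (hz : ‖z‖ < 1) :
    HasSum (fun k ↦ Ring.choose a k * z ^ k) ((1 + z) ^ a) := by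
  have h := (one_add_cpow_hasFPowerSeriesOnBall_zero (a := a)).hasSum (y := z)
    (by simpa [edist_zero_right, ← ofReal_norm] using hz)
  simpa only [binomialSeries, FormalMultilinearSeries.ofScalars_apply_eq, smul_eq_mul, zero_add]
    using h

theorem Complex.hasSum_choose_mul_pow_of_norm_le_one {a : ℝ} (ha : 0 < a) {z : ℂ} (hz : ‖z‖ ≤ 1) :
    HasSum (fun k ↦ ((Ring.choose a k : ℝ) : ℂ) * z ^ k) ((1 + z) ^ (a : ℂ)) := by
  have hbound (k : ℕ) (w : ℂ) (hw : w ∈ closedBall (0 : ℂ) 1) :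
      ‖((Ring.choose a k : ℝ) : ℂ) * w ^ k‖ ≤ |Ring.choose a k| := by
    rw [mem_closedBall_zero_iff] at hw
    rw [norm_mul, norm_pow, norm_real, Real.norm_eq_abs]
    exact mul_le_of_le_one_right (abs_nonneg _) (pow_le_one₀ (norm_nonneg _) hw)
  have hsum_cont :
      ContinuousOn (fun w ↦ ∑' k, ((Ring.choose a k : ℝ) : ℂ) * w ^ k) (closedBall 0 1) :=
    continuousOn_tsum (fun k ↦ by fun_prop) (Real.summable_abs_choose ha) hbound
  have hpow_cont : ContinuousOn (fun w : ℂ ↦ (1 + w) ^ (a : ℂ)) (closedBall 0 1) := by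
    intro w hw
    refine ((continuousAt_cpow_const_of_re_pos (Or.inl ?_) (by simpa using ha)).comp
      (by fun_prop : ContinuousAt (fun w : ℂ ↦ 1 + w) w)).continuousWithinAt
    have := neg_le_of_abs_le ((abs_re_le_norm w).trans (mem_closedBall_zero_iff.mp hw))
    simp only [add_re, one_re]
    linarith
  have heq : Set.EqOn (fun w ↦ ∑' k, ((Ring.choose a k : ℝ) : ℂ) * w ^ k)
      (fun w ↦ (1 + w) ^ (a : ℂ)) (ball 0 1) := fun w hw ↦ by
    simpa only [ofReal_choose] using
      (hasSum_choose_mul_pow_of_norm_lt_one a (mem_ball_zero_iff.mp hw)).tsum_eq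
  have hz' : z ∈ closedBall (0 : ℂ) 1 := mem_closedBall_zero_iff.mpr hz
  have heq_closed := heq.of_subset_closure hsum_cont hpow_cont ball_subset_closedBall
    (closure_ball (0 : ℂ) one_ne_zero).ge hz'
  dsimp only at heq_closed
  rw [← heq_closed]
  exact (Summable.of_norm_bounded (Real.summable_abs_choose ha) fun k ↦ hbound k z hz').hasSum

theorem Complex.one_add_exp_mul_I (φ : ℝ) :
    1 + exp (φ * I) = ↑(2 * Real.cos (φ / 2)) * exp (↑(φ / 2) * I) := by
  rw [ofReal_mul, ofReal_cos, ofReal_ofNat, two_cos, add_mul, ← exp_add, ← exp_add]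
  push_cast
  ring_nf
  simp [add_comm]

theorem Complex.ofReal_mul_exp_mul_I_cpow {r θ : ℝ} (hr : 0 < r)
    (hθ : θ ∈ Set.Ioc (-Real.pi) Real.pi) (s : ℂ) :
    (r * exp (θ * I)) ^ s = (r : ℂ) ^ s * exp (θ * s * I) := by
  have hlog : log (exp (θ * I)) = θ * I := log_exp (by simpa using hθ.1) (by simpa using hθ.2)
  rw [cpow_def_of_ne_zero (mul_ne_zero (ofReal_ne_zero.mpr hr.ne') (exp_ne_zero _)),
    cpow_def_of_ne_zero (ofReal_ne_zero.mpr hr.ne'), log_ofReal_mul hr (exp_ne_zero _), hlog,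
    ← exp_add, ofReal_log hr.le]
  ring_nf

theorem binomial_series_cos (n : ℝ) (hn : 0 < n) (φ : ℝ) (hφ : φ ∈ Set.Ioo (-Real.pi) Real.pi) :
    HasSum
      (fun k : ℕ => ((∏ j ∈ Finset.range k, (n - j)) / k.factorial) * Real.cos (k * φ))
      ((2 : ℝ) ^ n * Real.cos (φ / 2) ^ n * Real.cos (n * φ / 2)) := by
  obtain ⟨hφ₁, hφ₂⟩ := hφ
  have hcos : 0 < Real.cos (φ / 2) := Real.cos_pos_of_mem_Ioo ⟨by linarith, by linarith⟩
  have hsum := hasSum_re <|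
    hasSum_choose_mul_pow_of_norm_le_one hn (norm_exp_ofReal_mul_I φ).le
  rw [one_add_exp_mul_I, ofReal_mul_exp_mul_I_cpow (by positivity) ⟨by linarith, by linarith⟩,
    ← ofReal_cpow (by positivity), re_ofReal_mul, ← ofReal_mul, exp_ofReal_mul_I_re,
    Real.mul_rpow zero_le_two hcos.le] at hsum
  convert hsum using 2 with k
  · rw [← exp_nat_mul, ← mul_assoc, ← ofReal_natCast, ← ofReal_mul, re_ofReal_mul,
      exp_ofReal_mul_I_re, Ring.choose_eq_prod_range_div_factorial]
  · ring_nf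
end

section
/- Define B(1/2, k) = (∏_{j=0}^{k−1} (1/2 − j)) / k! for k ∈ ℕ. Then ∑_{k≥0} B(1/2, k) · cos(kπ/3) = (1/2)·√(3 + 2√3). -/
/-!
Put `z = exp(iπ/3)` and `S = ∑ B(1/2,k) zᵏ`; the sum in question is `Re S`.
For `0 ≤ r ≤ 1`, Pascal's rule writes `B(r,k+1)` as the sum of two consecutive coefficients
`B(r-1,k)`, `B(r-1,k+1)` of opposite signs and decreasing size, so `∑ |B(r,k+1)|` telescopes
to at most `1`. Hence the series converges absolutely on the closed unit disc, and `|S - 1| ≤ 1`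
gives `Re S ≥ 0`.
The Cauchy product and the Chu–Vandermonde identity give `S² = 1 + z = 3/2 + (√3/2) i`, and the
square root with nonnegative real part of a number `w` has real part `√((|w| + Re w)/2)`.
-/

open Finset

theorem Ring.choose_eq_prod_range_div {K : Type*} [Field K] [CharZero K] (r : K) (k : ℕ) :
    Ring.choose r k = (∏ j ∈ range k, (r - j)) / k.factorial := by
  rw [Ring.choose_eq_smul, ← Polynomial.aeval_eq_smeval, ← Polynomial.eval_map_algebraMap,
    descPochhammer_map, descPochhammer_eval_eq_prod_range, smul_eq_mul, inv_mul_eq_div]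

theorem Ring.choose_succ_mul {K : Type*} [Field K] [CharZero K] (r : K) (k : ℕ) :
    Ring.choose r (k + 1) * (k + 1) = Ring.choose r k * (r - k) := by
  have hk : (k.factorial : K) ≠ 0 := Nat.cast_ne_zero.2 k.factorial_ne_zero
  rw [Ring.choose_eq_prod_range_div, Ring.choose_eq_prod_range_div, prod_range_succ,
    Nat.factorial_succ]
  push_cast
  field_simp

theorem abs_add_eq_abs_sub_abs {x y : ℝ} (hxy : x * y ≤ 0) (hyx : |y| ≤ |x|) :
    |x + y| = |x| - |y| := by
  rw [← Real.sqrt_sq (sub_nonneg.2 hyx), ← Real.sqrt_sq_eq_abs, sub_sq, sq_abs, sq_abs,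
    mul_assoc, ← abs_mul, abs_of_nonpos hxy]
  ring_nf

theorem abs_choose_succ_eq_sub {r : ℝ} (hr₀ : 0 ≤ r) (hr₁ : r ≤ 1) (k : ℕ) :
    |Ring.choose r (k + 1)| = |Ring.choose (r - 1) k| - |Ring.choose (r - 1) (k + 1)| := by
  have pascal : Ring.choose r (k + 1) = Ring.choose (r - 1) k + Ring.choose (r - 1) (k + 1) := by
    simpa using Ring.choose_succ_succ (r - 1) k
  have hk : (0 : ℝ) < k + 1 := by positivity
  have step := Ring.choose_succ_mul (r - 1) k
  rw [pascal]
  apply abs_add_eq_abs_sub_abs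
  · have sign_change : Ring.choose (r - 1) k * Ring.choose (r - 1) (k + 1) * (k + 1) =
        Ring.choose (r - 1) k ^ 2 * (r - 1 - k) := by
      rw [mul_assoc, step]; ring
    nlinarith [sq_nonneg (Ring.choose (r - 1) k)]
  · have shrink : |Ring.choose (r - 1) (k + 1)| * (k + 1) =
        |Ring.choose (r - 1) k| * (k + 1 - r) := by
      rw [← abs_of_pos hk, ← abs_mul, step, abs_mul, abs_of_pos hk,
        abs_of_nonpos (show r - 1 - k ≤ 0 by linarith)]
      ring
    nlinarith [abs_nonneg (Ring.choose (r - 1) k)]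

theorem sum_range_abs_choose_succ {r : ℝ} (hr₀ : 0 ≤ r) (hr₁ : r ≤ 1) (n : ℕ) :
    ∑ k ∈ range n, |Ring.choose r (k + 1)| = 1 - |Ring.choose (r - 1) n| := by
  simp_rw [abs_choose_succ_eq_sub hr₀ hr₁, sum_range_sub', Ring.choose_zero_right, abs_one]

theorem summable_abs_choose {r : ℝ} (hr₀ : 0 ≤ r) (hr₁ : r ≤ 1) :
    Summable fun k => |Ring.choose r k| := by
  refine (summable_nat_add_iff 1).1 (summable_of_sum_range_le (c := 1) (fun _ => abs_nonneg _) ?_)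
  intro n
  rw [sum_range_abs_choose_succ hr₀ hr₁]
  linarith [abs_nonneg (Ring.choose (r - 1) n)]

theorem tsum_abs_choose_succ_le_one {r : ℝ} (hr₀ : 0 ≤ r) (hr₁ : r ≤ 1) :
    ∑' k, |Ring.choose r (k + 1)| ≤ 1 := by
  refine Real.tsum_le_of_sum_range_le (fun _ => abs_nonneg _) fun n => ?_
  rw [sum_range_abs_choose_succ hr₀ hr₁]
  linarith [abs_nonneg (Ring.choose (r - 1) n)]

theorem Complex.norm_ofReal_mul_pow_le (a : ℝ) {z : ℂ} (hz : ‖z‖ ≤ 1) (k : ℕ) :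
    ‖(a : ℂ) * z ^ k‖ ≤ |a| := by
  rw [norm_mul, norm_pow, Complex.norm_real, Real.norm_eq_abs]
  exact mul_le_of_le_one_right (abs_nonneg a) (pow_le_one₀ (norm_nonneg z) hz)

theorem summable_norm_choose_mul_pow {r : ℝ} (hr₀ : 0 ≤ r) (hr₁ : r ≤ 1) {z : ℂ}
    (hz : ‖z‖ ≤ 1) :
    Summable fun k => ‖((Ring.choose r k : ℝ) : ℂ) * z ^ k‖ :=
  (summable_abs_choose hr₀ hr₁).of_nonneg_of_le (fun _ => norm_nonneg _)
    fun k => Complex.norm_ofReal_mul_pow_le _ hz k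

theorem tsum_choose_mul_pow_mul_tsum_choose_mul_pow {r s : ℝ} {z : ℂ}
    (hr : Summable fun k => ‖((Ring.choose r k : ℝ) : ℂ) * z ^ k‖)
    (hs : Summable fun k => ‖((Ring.choose s k : ℝ) : ℂ) * z ^ k‖) :
    (∑' k, ((Ring.choose r k : ℝ) : ℂ) * z ^ k) *
        (∑' k, ((Ring.choose s k : ℝ) : ℂ) * z ^ k) =
      ∑' k, ((Ring.choose (r + s) k : ℝ) : ℂ) * z ^ k := by
  rw [tsum_mul_tsum_eq_tsum_sum_antidiagonal_of_summable_norm hr hs]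
  refine tsum_congr fun n => ?_
  rw [Ring.add_choose_eq n (Commute.all r s), Complex.ofReal_sum, sum_mul]
  refine sum_congr rfl fun ij hij => ?_
  rw [← mem_antidiagonal.1 hij, pow_add, Complex.ofReal_mul]
  ring

theorem tsum_choose_one_mul_pow (z : ℂ) :
    ∑' k, ((Ring.choose 1 k : ℝ) : ℂ) * z ^ k = 1 + z := by
  rw [tsum_eq_sum (s := range 2)]
  · simp [sum_range_succ]
  · intro k hk
    rw [← Nat.cast_one, Ring.choose_natCast, Nat.choose_eq_zero_of_lt (by simpa using hk)]
    simp

theorem tsum_choose_half_mul_pow_sq {z : ℂ} (hz : ‖z‖ ≤ 1) :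
    (∑' k, ((Ring.choose (1 / 2) k : ℝ) : ℂ) * z ^ k) ^ 2 = 1 + z := by
  have h := summable_norm_choose_mul_pow (by norm_num : (0 : ℝ) ≤ 1 / 2) (by norm_num) hz
  rw [sq, tsum_choose_mul_pow_mul_tsum_choose_mul_pow h h, add_halves, tsum_choose_one_mul_pow]

theorem re_tsum_choose_mul_pow_nonneg {r : ℝ} (hr₀ : 0 ≤ r) (hr₁ : r ≤ 1) {z : ℂ}
    (hz : ‖z‖ ≤ 1) :
    0 ≤ (∑' k, ((Ring.choose r k : ℝ) : ℂ) * z ^ k).re := by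
  have hsum := summable_norm_choose_mul_pow hr₀ hr₁ hz
  have hsum_tail : Summable fun k => ‖((Ring.choose r (k + 1) : ℝ) : ℂ) * z ^ (k + 1)‖ :=
    hsum.comp_injective (add_left_injective 1)
  have habs_tail : Summable fun k => |Ring.choose r (k + 1)| :=
    (summable_abs_choose hr₀ hr₁).comp_injective (add_left_injective 1)
  set tail := ∑' k, ((Ring.choose r (k + 1) : ℝ) : ℂ) * z ^ (k + 1)
  have htail : ‖tail‖ ≤ 1 := calc
    ‖tail‖ ≤ ∑' k, ‖((Ring.choose r (k + 1) : ℝ) : ℂ) * z ^ (k + 1)‖ :=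
      norm_tsum_le_tsum_norm hsum_tail
    _ ≤ ∑' k, |Ring.choose r (k + 1)| :=
      hsum_tail.tsum_le_tsum (fun k => Complex.norm_ofReal_mul_pow_le _ hz _) habs_tail
    _ ≤ 1 := tsum_abs_choose_succ_le_one hr₀ hr₁
  rw [hsum.of_norm.tsum_eq_zero_add]
  simp only [Ring.choose_zero_right, Complex.ofReal_one, pow_zero, mul_one, Complex.add_re,
    Complex.one_re]
  linarith [neg_abs_le tail.re, Complex.abs_re_le_norm tail]

theorem Complex.re_eq_sqrt_of_re_nonneg {w : ℂ} (hw : 0 ≤ w.re) :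
    w.re = √((‖w ^ 2‖ + (w ^ 2).re) / 2) := by
  rw [norm_pow, Complex.sq_norm, Complex.normSq_apply, sq, Complex.mul_re]
  ring_nf
  rw [Real.sqrt_sq hw]

theorem re_one_add_exp_pi_div_three_mul_I :
    (1 + Complex.exp (↑(Real.pi / 3) * Complex.I)).re = 3 / 2 := by
  rw [Complex.add_re, Complex.one_re, Complex.exp_ofReal_mul_I_re, Real.cos_pi_div_three]
  norm_num

theorem norm_one_add_exp_pi_div_three_mul_I :
    ‖1 + Complex.exp (↑(Real.pi / 3) * Complex.I)‖ = √3 := by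
  rw [Complex.norm_eq_sqrt_sq_add_sq, re_one_add_exp_pi_div_three_mul_I, Complex.add_im,
    Complex.one_im, Complex.exp_ofReal_mul_I_im, Real.sin_pi_div_three, zero_add, div_pow √3,
    Real.sq_sqrt zero_le_three]
  norm_num

theorem binomial_half_cos_sixty :
    HasSum
      (fun k : ℕ => ((∏ j ∈ Finset.range k, ((1 : ℝ) / 2 - j)) / k.factorial) * Real.cos (k * Real.pi / 3))
      ((1 / 2) * Real.sqrt (3 + 2 * Real.sqrt 3)) := by
  set z := Complex.exp (↑(Real.pi / 3) * Complex.I)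
  have hz : ‖z‖ ≤ 1 := (Complex.norm_exp_ofReal_mul_I _).le
  have hr₀ : (0 : ℝ) ≤ 1 / 2 := by norm_num
  have hr₁ : (1 : ℝ) / 2 ≤ 1 := by norm_num
  have hS := Complex.hasSum_re (summable_norm_choose_mul_pow hr₀ hr₁ hz).of_norm.hasSum
  have hterm (k : ℕ) : (((Ring.choose (1 / 2) k : ℝ) : ℂ) * z ^ k).re =
      (∏ j ∈ range k, ((1 : ℝ) / 2 - j)) / k.factorial * Real.cos (k * Real.pi / 3) := by
    rw [Complex.re_ofReal_mul, ← Complex.exp_nat_mul,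
      show (k : ℂ) * (↑(Real.pi / 3) * Complex.I) = ↑(k * Real.pi / 3) * Complex.I by
        push_cast; ring,
      Complex.exp_ofReal_mul_I_re, Ring.choose_eq_prod_range_div]
  have hvalue :
      (∑' k, ((Ring.choose (1 / 2) k : ℝ) : ℂ) * z ^ k).re = 1 / 2 * √(3 + 2 * √3) := by
    rw [Complex.re_eq_sqrt_of_re_nonneg (re_tsum_choose_mul_pow_nonneg hr₀ hr₁ hz),
      tsum_choose_half_mul_pow_sq hz, norm_one_add_exp_pi_div_three_mul_I,
      re_one_add_exp_pi_div_three_mul_I,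
      show (√3 + 3 / 2) / 2 = (3 + 2 * √3) / 2 ^ 2 by ring, Real.sqrt_div' _ (by positivity),
      Real.sqrt_sq zero_le_two]
    ring
  simpa only [hterm, hvalue] using hS
end
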